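/- If g ∈ A_I with I = {m,…,m+k−1}, and z = a_{i_0}^{-1} g a_{j_0} is 1-pure with i_0+1 < m or i_0+1 > m+k, then necessarily j_0 = i_0. -/

import Mathlib

/-- Braid relations on generators σ_1,…,σ_n (0-indexed by `Fin n`). -/
def braidRels (n : ℕ) : Set (FreeGroup (Fin n)) :=
  { r | (∃ i j : Fin n, (i : ℕ) + 2 ≤ (j : ℕ) ∧
          r = FreeGroup.of i * FreeGroup.of j * (FreeGroup.of i)⁻¹ * (FreeGroup.of j)⁻¹) ∨
        (∃ i j : Fin n, (i : ℕ) + 1 = (j : ℕ) ∧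
          r = FreeGroup.of i * FreeGroup.of j * FreeGroup.of i *
              (FreeGroup.of j)⁻¹ * (FreeGroup.of i)⁻¹ * (FreeGroup.of j)⁻¹) }

/-- The braid group on `n+1` strands. -/
abbrev BraidGroup (n : ℕ) := PresentedGroup (braidRels n)

/-- The Artin generator σ_j (1-indexed, `1 ≤ j ≤ n`); junk value `1` outside that range. -/
noncomputable def σb {n : ℕ} (j : ℕ) : BraidGroup n :=
  if h : 1 ≤ j ∧ j ≤ n then PresentedGroup.of (⟨j - 1, by omega⟩ : Fin n) else 1

/-- a_i = σ_i σ_{i-1} ⋯ σ_1, with a_0 = 1. -/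
noncomputable def abr {n : ℕ} : ℕ → BraidGroup n
  | 0 => 1
  | i + 1 => σb (i + 1) * abr i

/-- transposition (i+1, i+2) (1-based) in S_{n+1} -/
def swapGen {n : ℕ} (i : Fin n) : Equiv.Perm (Fin (n + 1)) :=
  Equiv.swap i.castSucc i.succ

lemma swap_disjoint_commute {N : ℕ} {a b c d : Fin N} (h1 : a ≠ c) (h2 : a ≠ d) (h3 : b ≠ c)
    (h4 : b ≠ d) : Commute (Equiv.swap a b) (Equiv.swap c d) := by
  apply Equiv.Perm.Disjoint.commute
  intro x
  by_cases hxa : x = a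
  · subst hxa; right; exact Equiv.swap_apply_of_ne_of_ne h1 h2
  by_cases hxb : x = b
  · subst hxb; right; exact Equiv.swap_apply_of_ne_of_ne h3 h4
  · left; exact Equiv.swap_apply_of_ne_of_ne hxa hxb

lemma swap_braid {N : ℕ} (a b c : Fin N) (hab : a ≠ b) (hbc : b ≠ c) (hac : a ≠ c) :
    Equiv.swap a b * Equiv.swap b c * Equiv.swap a b =
      Equiv.swap b c * Equiv.swap a b * Equiv.swap b c := by
  have h1 : Equiv.swap a b * Equiv.swap b c * Equiv.swap a b = Equiv.swap a c := by
    rw [Equiv.swap_comm a b, Equiv.swap_comm b c]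
    exact Equiv.swap_mul_swap_mul_swap hbc.symm hac.symm
  have h2 : Equiv.swap b c * Equiv.swap a b * Equiv.swap b c = Equiv.swap c a := by
    exact Equiv.swap_mul_swap_mul_swap hab hac
  rw [h1, h2, Equiv.swap_comm]

lemma braid_rels_perm (n : ℕ) : ∀ r ∈ braidRels n, FreeGroup.lift (swapGen (n := n)) r = 1 := by
  rintro r (⟨i, j, hij, rfl⟩ | ⟨i, j, hij, rfl⟩) <;>
    simp only [map_mul, map_inv, FreeGroup.lift_apply_of]
  · have hc : Commute (swapGen (n := n) i) (swapGen j) := by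
      apply swap_disjoint_commute <;>
        exact Fin.ne_of_val_ne (by simp only [Fin.val_succ, Fin.coe_castSucc]; omega)
    rw [hc.eq]; group
  · have : j.castSucc = i.succ := by
      apply Fin.val_injective; simp only [Fin.val_succ, Fin.coe_castSucc]; omega
    have hb := swap_braid (N := n+1) i.castSucc i.succ j.succ
      (Fin.ne_of_val_ne (by simp only [Fin.val_succ, Fin.coe_castSucc]; omega)) (Fin.ne_of_val_ne (by simp only [Fin.val_succ, Fin.coe_castSucc]; omega))
      (Fin.ne_of_val_ne (by simp only [Fin.val_succ, Fin.coe_castSucc]; omega))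
    unfold swapGen
    rw [this, hb]; group

/-- The canonical projection from the braid group onto the symmetric group S_{n+1}. -/
noncomputable def πb {n : ℕ} : BraidGroup n →* Equiv.Perm (Fin (n + 1)) :=
  PresentedGroup.toGroup (braid_rels_perm n)

/-- The standard parabolic subgroup generated by σ_m, …, σ_{m+k-1}. -/
noncomputable def AIb (n m k : ℕ) : Subgroup (BraidGroup n) :=
  Subgroup.closure { x | ∃ j, m ≤ j ∧ j ≤ m + k - 1 ∧ x = σb j }


lemma pib_sigma {n : ℕ} (j : ℕ) (h1 : 1 ≤ j) (h2 : j ≤ n) :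
    πb (σb j : BraidGroup n) = swapGen (⟨j - 1, by omega⟩ : Fin n) := by
  unfold σb
  rw [dif_pos ⟨h1, h2⟩]
  exact PresentedGroup.toGroup.of (braid_rels_perm n)

lemma pib_abr {n : ℕ} (i : ℕ) (hi : i ≤ n) :
    πb (abr i : BraidGroup n) (⟨0, by omega⟩ : Fin (n + 1)) = ⟨i, by omega⟩ := by
  induction i with
  | zero => simp [abr]
  | succ i ih =>
    have ih' := ih (by omega)
    show πb (σb (i + 1) * abr i) _ = _
    rw [map_mul, Equiv.Perm.mul_apply, ih', pib_sigma (i + 1) (by omega) (by omega)]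
    unfold swapGen
    have hc : ((⟨i + 1 - 1, by omega⟩ : Fin n).castSucc : Fin (n + 1)) = ⟨i, by omega⟩ := rfl
    have hs : ((⟨i + 1 - 1, by omega⟩ : Fin n).succ : Fin (n + 1)) = ⟨i + 1, by omega⟩ := rfl
    rw [hc, hs, Equiv.swap_apply_left]

lemma pib_fix {n m k : ℕ} (hm : 1 ≤ m) (hmk : m + k - 1 ≤ n) (g : BraidGroup n) (hg : g ∈ AIb n m k)
    (x : Fin (n + 1)) (hx : x.val + 1 < m ∨ m + k - 1 < x.val) : πb g x = x := by
  induction hg using Subgroup.closure_induction with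
  | mem y hy =>
    obtain ⟨j, hj1, hj2, rfl⟩ := hy
    rw [pib_sigma j (by omega) (by omega)]
    unfold swapGen
    apply Equiv.swap_apply_of_ne_of_ne <;>
      refine Fin.ne_of_val_ne ?_
    · simp only [Fin.coe_castSucc]; omega
    · simp only [Fin.val_succ]; omega
  | one => simp
  | mul a b _ _ ha hb => rw [map_mul, Equiv.Perm.mul_apply, hb, ha]
  | inv a _ ha =>
    rw [map_inv]
    exact Equiv.Perm.inv_eq_iff_eq.mpr ha.symm

theorem lemma_technical_indices (n m k i0 j0 : ℕ) (hm : 1 ≤ m) (hk : 1 ≤ k)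
    (hmk : m + k - 1 ≤ n) (hi0 : i0 ≤ n) (hj0 : j0 ≤ n)
    (g : BraidGroup n) (hg : g ∈ AIb n m k)
    (z : BraidGroup n) (hz : z = (abr i0)⁻¹ * g * abr j0)
    (hpure : πb z (⟨0, by omega⟩ : Fin (n + 1)) = ⟨0, by omega⟩)
    (hout : i0 + 1 < m ∨ m + k < i0 + 1) :
    j0 = i0 := by
  subst hz
  rw [map_mul, map_mul, map_inv, Equiv.Perm.mul_apply, Equiv.Perm.mul_apply,
    pib_abr j0 hj0] at hpure
  have hkey : πb g (⟨j0, by omega⟩ : Fin (n + 1)) = ⟨i0, by omega⟩ := by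
    have := congrArg (πb (abr i0 : BraidGroup n)) hpure
    rw [← Equiv.Perm.mul_apply, mul_inv_cancel, Equiv.Perm.one_apply, pib_abr i0 hi0] at this
    exact this
  have hfix : πb g (⟨i0, by omega⟩ : Fin (n + 1)) = ⟨i0, by omega⟩ :=
    pib_fix hm hmk g hg _ (by simp only []; omega)
  have := (πb g).injective (hkey.trans hfix.symm)
  exact congrArg Fin.val this
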